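/- Let p_e(ρ) = a ρ^γ with a > 0 and γ > 2, and define the relative pressure p_e(ρ|ρ̄) = p_e(ρ) − p_e(ρ̄) − p_e'(ρ̄)(ρ − ρ̄). Then for any fixed ρ̄ > 0 there exists a constant C > 0 such that |ρ − ρ̄|² ≤ C · p_e(ρ|ρ̄) for all ρ ≥ 0. -/

import Mathlib

open Set Real

/-!
With `D(x) = x^γ - ρ̄^γ - γ ρ̄^(γ-1) (x - ρ̄) - (γ ρ̄^(γ-2) / 2) (x - ρ̄)²` one computes
`D'(x) = γ x (x^(γ-2) - ρ̄^(γ-2))`, which for `γ ≥ 2` has the sign of `x - ρ̄` on `x ≥ 0`.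
Hence `D` attains its minimum over `[0, ∞)` at `ρ̄`, where it vanishes, so the relative pressure
dominates `(a γ ρ̄^(γ-2) / 2) (ρ - ρ̄)²`.
-/

lemma isMinOn_Ici_of_hasDerivAt_sign {f f' : ℝ → ℝ} {a c : ℝ} (hac : a ≤ c)
    (hf : ContinuousOn f (Ici a)) (hf' : ∀ x, a < x → HasDerivAt f (f' x) x)
    (hle : ∀ x ∈ Ioo a c, f' x ≤ 0) (hge : ∀ x, c < x → 0 ≤ f' x) :
    IsMinOn f (Ici a) c := by
  intro x (hx : a ≤ x)
  rcases le_total x c with hxc | hcx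
  · have hanti : AntitoneOn f (Icc a c) := by
      refine antitoneOn_of_hasDerivWithinAt_nonpos (f' := f') (convex_Icc a c)
        (hf.mono Icc_subset_Ici_self) (fun y hy ↦ ?_) (fun y hy ↦ ?_)
      · rw [interior_Icc] at hy
        exact (hf' y hy.1).hasDerivWithinAt
      · exact hle y (by rwa [interior_Icc] at hy)
    exact hanti ⟨hx, hxc⟩ ⟨hac, le_rfl⟩ hxc
  · have hmono : MonotoneOn f (Ici c) := by
      refine monotoneOn_of_hasDerivWithinAt_nonneg (f' := f') (convex_Ici c)
        (hf.mono (Ici_subset_Ici.mpr hac)) (fun y hy ↦ ?_) (fun y hy ↦ ?_)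
      · rw [interior_Ici] at hy
        exact (hf' y (hac.trans_lt hy)).hasDerivWithinAt
      · exact hge y (by rwa [interior_Ici] at hy)
    exact hmono self_mem_Ici hcx hcx

lemma rpow_sub_one_eq_rpow_sub_two_mul {γ x : ℝ} (hγ : 2 ≤ γ) (hx : 0 ≤ x) :
    x ^ (γ - 1) = x ^ (γ - 2) * x := by
  rw [show γ - 1 = (γ - 2) + 1 by ring, rpow_add' hx (by linarith), rpow_one]

lemma mul_sq_le_rpow_sub_rpow_sub_mul {γ ρb x : ℝ} (hγ : 2 ≤ γ) (hρb : 0 ≤ ρb) (hx : 0 ≤ x) :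
    γ * ρb ^ (γ - 2) / 2 * (x - ρb) ^ 2 ≤ x ^ γ - ρb ^ γ - γ * ρb ^ (γ - 1) * (x - ρb) := by
  set D : ℝ → ℝ := fun x ↦ x ^ γ - ρb ^ γ - γ * ρb ^ (γ - 1) * (x - ρb)
    - γ * ρb ^ (γ - 2) / 2 * (x - ρb) ^ 2 with hD
  have hD' : ∀ y, 0 < y → HasDerivAt D (γ * y * (y ^ (γ - 2) - ρb ^ (γ - 2))) y := by
    intro y hy
    have hpow := hasDerivAt_rpow_const (x := y) (p := γ) (Or.inl hy.ne')
    have hlin := ((hasDerivAt_id y).sub_const ρb).const_mul (γ * ρb ^ (γ - 1))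
    have hsq := (((hasDerivAt_id y).sub_const ρb).pow 2).const_mul (γ * ρb ^ (γ - 2) / 2)
    refine (((hpow.sub_const (ρb ^ γ)).sub hlin).sub hsq).congr_deriv ?_
    simp only [id, Nat.cast_ofNat, rpow_sub_one_eq_rpow_sub_two_mul hγ hy.le,
      rpow_sub_one_eq_rpow_sub_two_mul hγ hρb]
    ring
  have hcont : ContinuousOn D (Ici 0) := by
    have := continuous_rpow_const (q := γ) (by linarith)
    fun_prop
  have hmin : D ρb ≤ D x := isMinOn_Ici_of_hasDerivAt_sign hρb hcont hD'
    (fun y ⟨hy, hyρ⟩ ↦ mul_nonpos_of_nonneg_of_nonpos (by positivity)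
      (sub_nonpos.mpr (rpow_le_rpow hy.le hyρ.le (by linarith))))
    (fun y hy ↦ mul_nonneg (mul_nonneg (by linarith) (hρb.trans hy.le))
      (sub_nonneg.mpr (rpow_le_rpow hρb hy.le (by linarith))))
    (mem_Ici.mpr hx)
  simp only [hD] at hmin
  linarith

/-- for p_e(ρ) = aρ^γ with a > 0, γ > 2 and fixed ρ̄ > 0, the relative
pressure dominates the squared distance: |ρ − ρ̄|² ≤ C·p_e(ρ|ρ̄) for all ρ ≥ 0. -/
theorem stmt6 (a γ ρb : ℝ) (ha : 0 < a) (hγ : 2 < γ) (hρb : 0 < ρb) :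
    ∃ C > 0, ∀ ρ : ℝ, 0 ≤ ρ →
      (ρ - ρb) ^ 2 ≤
        C * (a * ρ ^ γ - a * ρb ^ γ - a * γ * ρb ^ (γ - 1) * (ρ - ρb)) := by
  have hk : 0 < γ * ρb ^ (γ - 2) := mul_pos (by linarith) (rpow_pos_of_pos hρb _)
  refine ⟨2 / (a * (γ * ρb ^ (γ - 2))), by positivity, fun ρ hρ ↦ ?_⟩
  have key := mul_sq_le_rpow_sub_rpow_sub_mul hγ.le hρb.le hρ
  calc (ρ - ρb) ^ 2
      = 2 / (a * (γ * ρb ^ (γ - 2))) * (a * (γ * ρb ^ (γ - 2) / 2 * (ρ - ρb) ^ 2)) := by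
        field_simp
    _ ≤ _ := by gcongr; linarith [mul_le_mul_of_nonneg_left key ha.le]
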